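/- arXiv:2307.09792 — 2 statements merged into one kernel-verified Lean document; each statement's English description precedes it below -/
import Mathlib

section
/- Completeness of the RTD-hardness reduction: Let G = (V,E) be a finite graph with a dominating set T of size k, with k ≥ 1. Let Z, H, X, c_h, c_{u,h} be as in the reduction, and C = {c_h : h ∈ H} ∪ {c_{u,h} : u ∈ V, h ∈ H}. Then RTD(C) ≤ k. -/
/-- A set `S` is a teaching set of `c` with respect to the class `C`:
every other concept in `C` differs from `c` on some point of `S`. -/
def IsTeachingSet {X : Type*} (C : Finset (X → Bool)) (c : X → Bool) (S : Finset X) : Prop :=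
  ∀ c' ∈ C, c' ≠ c → ∃ x ∈ S, c x ≠ c' x

/-- Minimum teaching set size of `c` with respect to `C`. -/
noncomputable def TS {X : Type*} (C : Finset (X → Bool)) (c : X → Bool) : ℕ :=
  sInf {n | ∃ S : Finset X, S.card = n ∧ IsTeachingSet C c S}

/-- A teaching plan: an ordering of all concepts of `C` (as first components)
together with sets that teach each concept w.r.t. the remaining suffix. -/
def IsTeachingPlan {X : Type*} [Fintype X] [DecidableEq X]
    (C : Finset (X → Bool)) (L : List ((X → Bool) × Finset X)) : Prop :=
  (L.map Prod.fst).Nodup ∧ (L.map Prod.fst).toFinset = C ∧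
  ∀ i (hi : i < L.length),
    IsTeachingSet ((L.drop i).map Prod.fst).toFinset (L.get ⟨i, hi⟩).1 (L.get ⟨i, hi⟩).2

/-- Recursive teaching dimension. -/
noncomputable def RTD {X : Type*} [Fintype X] [DecidableEq X] (C : Finset (X → Bool)) : ℕ :=
  sInf {k | ∃ L, IsTeachingPlan C L ∧ ∀ p ∈ L, p.2.card ≤ k}

/-- The gadget class: all boolean functions on `Z` with exactly `k` ones. -/
def gadgetH (Z : Type*) [Fintype Z] [DecidableEq Z] (k : ℕ) : Finset (Z → Bool) :=
  Finset.univ.filter fun h => (Finset.univ.filter fun z => h z = true).card = k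

/-- The concept `c_h` of the reduction: all-one on `Z × V`, `h(z)` on `V × Z`. -/
def cH {V Z : Type*} (h : Z → Bool) : (V × Z) ⊕ (Z × V) → Bool
  | Sum.inl p => h p.2
  | Sum.inr _ => true

/-- The concept `c_{u,h}` of the reduction. -/
def cUH {V Z : Type*} [DecidableEq V] (G : SimpleGraph V) [DecidableRel G.Adj]
    (u : V) (h : Z → Bool) : (V × Z) ⊕ (Z × V) → Bool
  | Sum.inl p => !decide (p.1 = u ∨ G.Adj u p.1)
  | Sum.inr p => h p.1 && decide (u = p.2)

/-- The full concept class of the reduction. -/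
noncomputable def redC {V Z : Type*} [Fintype V] [DecidableEq V] [Fintype Z] [DecidableEq Z]
    (G : SimpleGraph V) [DecidableRel G.Adj] (k : ℕ) :
    Finset (((V × Z) ⊕ (Z × V)) → Bool) :=
  (gadgetH Z k).image (cH (V := V)) ∪
    ((Finset.univ : Finset V) ×ˢ gadgetH Z k).image fun p => cUH G p.1 p.2

/-!
Teach every `c_h` first, by the `k` points `(t, z)` of a bijection between the dominating set
`T` and the ones of `h`: another `c_{h'}` is told apart at a one of `h` that `h'` misses, and
`c_{u,h'}` at the point `(t, z)` with `t` dominating `u`, where it vanishes. What remains are the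
`c_{u,h}`, each taught by the `k` points `(z, u)` with `h z = 1`.
-/

open Finset

theorem IsTeachingSet.mono {X : Type*} {C D : Finset (X → Bool)} {c : X → Bool} {S : Finset X}
    (hCD : C ⊆ D) (h : IsTeachingSet D c S) : IsTeachingSet C c S :=
  fun c' hc' hne => h c' (hCD hc') hne

section TeachingPlans

variable {X : Type*} [Fintype X] [DecidableEq X]

def HasPlanOfWidth (C : Finset (X → Bool)) (k : ℕ) : Prop :=
  ∃ L, IsTeachingPlan C L ∧ ∀ p ∈ L, #p.2 ≤ k

theorem RTD_le_of_hasPlanOfWidth {C : Finset (X → Bool)} {k : ℕ} (h : HasPlanOfWidth C k) :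
    RTD C ≤ k :=
  Nat.sInf_le h

theorem hasPlanOfWidth_empty (k : ℕ) : HasPlanOfWidth (∅ : Finset (X → Bool)) k :=
  ⟨[], ⟨by simp, by simp, by simp⟩, by simp⟩

theorem HasPlanOfWidth.insert {C : Finset (X → Bool)} {k : ℕ} {c : X → Bool} {S : Finset X}
    (hC : HasPlanOfWidth C k) (hS : IsTeachingSet (insert c C) c S) (hSk : #S ≤ k) :
    HasPlanOfWidth (insert c C) k := by
  by_cases hc : c ∈ C
  · rwa [insert_eq_of_mem hc]
  obtain ⟨L, ⟨hnodup, hcover, hteach⟩, hwidth⟩ := hC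
  refine ⟨(c, S) :: L, ⟨?_, by simp [hcover], ?_⟩, List.forall_mem_cons.2 ⟨hSk, hwidth⟩⟩
  · rw [← hcover, List.mem_toFinset] at hc
    exact List.nodup_cons.2 ⟨hc, hnodup⟩
  · rintro (_ | i) hi
    · simpa [hcover] using hS
    · simpa using hteach i (by simpa using hi)

theorem HasPlanOfWidth.union {C A : Finset (X → Bool)} {k : ℕ} (hC : HasPlanOfWidth C k)
    (hA : ∀ a ∈ A, ∃ S : Finset X, #S ≤ k ∧ IsTeachingSet (C ∪ A) a S) :
    HasPlanOfWidth (C ∪ A) k := by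
  induction A using Finset.induction_on with
  | empty => simpa using hC
  | insert a A _ ih =>
    rw [union_insert] at hA ⊢
    obtain ⟨S, hSk, hS⟩ := hA a (mem_insert_self a _)
    refine (ih fun b hb => ?_).insert hS hSk
    obtain ⟨S', hS'k, hS'⟩ := hA b (mem_insert_of_mem hb)
    exact ⟨S', hS'k, hS'.mono (subset_insert _ _)⟩

end TeachingPlans

theorem Finset.exists_pairing_of_card_eq {α β : Type*} {s : Finset α} {t : Finset β}
    (hst : #s = #t) : ∃ M : Finset (α × β), #M ≤ #s ∧
      (∀ a ∈ s, ∃ b ∈ t, (a, b) ∈ M) ∧ ∀ b ∈ t, ∃ a ∈ s, (a, b) ∈ M := by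
  classical
  let e : s ≃ t := Fintype.equivOfCardEq (by simpa using hst)
  let f : s → α × β := fun a => (a.1, (e a).1)
  refine ⟨s.attach.image f, card_image_le.trans card_attach.le,
    fun a ha => ⟨_, (e ⟨a, ha⟩).2, mem_image_of_mem f (mem_attach s ⟨a, ha⟩)⟩,
    fun b hb => ⟨_, (e.symm ⟨b, hb⟩).2, ?_⟩⟩
  simp [f]

section Reduction

variable {V Z : Type*} [Fintype Z]

def trueSet (h : Z → Bool) : Finset Z := {z | h z = true}

theorem card_trueSet_of_mem_gadgetH [DecidableEq Z] {k : ℕ} {h : Z → Bool}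
    (hh : h ∈ gadgetH Z k) : #(trueSet h) = k :=
  (mem_filter.1 hh).2

theorem exists_true_false_of_card_trueSet_eq {h h' : Z → Bool}
    (hcard : #(trueSet h) = #(trueSet h')) (hne : h ≠ h') :
    ∃ z, h z = true ∧ h' z = false := by
  by_contra! hmono
  have hsub : trueSet h ⊆ trueSet h' := fun z hz => by
    simpa [trueSet] using hmono z (by simpa [trueSet] using hz)
  have heq := eq_of_subset_of_card_le hsub hcard.ge
  exact hne <| funext fun z => Bool.eq_iff_iff.2 <| by simpa [trueSet] using congrArg (z ∈ ·) heq

theorem exists_true_false_of_mem_gadgetH [DecidableEq Z] {k : ℕ} {h h' : Z → Bool}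
    (hh : h ∈ gadgetH Z k) (hh' : h' ∈ gadgetH Z k) (hne : h ≠ h') :
    ∃ z, h z = true ∧ h' z = false :=
  exists_true_false_of_card_trueSet_eq
    ((card_trueSet_of_mem_gadgetH hh).trans (card_trueSet_of_mem_gadgetH hh').symm) hne

variable [Fintype V] [DecidableEq V] [DecidableEq Z] (G : SimpleGraph V) [DecidableRel G.Adj]

theorem exists_teachingSet_cUH {k : ℕ} (hk : 1 ≤ k) {h : Z → Bool} (hh : h ∈ gadgetH Z k)
    (u : V) : ∃ S : Finset ((V × Z) ⊕ (Z × V)), #S ≤ k ∧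
      IsTeachingSet (((univ : Finset V) ×ˢ gadgetH Z k).image fun p => cUH G p.1 p.2)
        (cUH G u h) S := by
  refine ⟨(trueSet h).image fun z => Sum.inr (z, u), ?_, ?_⟩
  · exact card_image_le.trans (card_trueSet_of_mem_gadgetH hh).le
  rintro _ hc' hne
  obtain ⟨⟨u', h'⟩, hp, rfl⟩ := mem_image.1 hc'
  have hh' : h' ∈ gadgetH Z k := (mem_product.1 hp).2
  by_cases hu : u' = u
  · subst hu
    obtain ⟨z, hz, hz'⟩ :=
      exists_true_false_of_mem_gadgetH hh hh' (ne_of_apply_ne (cUH G u') hne).symm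
    exact ⟨Sum.inr (z, u'), by simpa [trueSet] using hz, by simp [cUH, hz, hz']⟩
  · -- `c_{u',h'}` vanishes on the column `Z × {u}`, where `c_{u,h}` has a one
    obtain ⟨z, hz⟩ : (trueSet h).Nonempty := by
      rw [← card_pos, card_trueSet_of_mem_gadgetH hh]; omega
    exact ⟨Sum.inr (z, u), mem_image_of_mem _ hz, by simp_all [trueSet, cUH]⟩

theorem exists_teachingSet_cH {k : ℕ} {T : Finset V} (hT : #T = k)
    (hdom : ∀ u : V, ∃ v ∈ T, v = u ∨ G.Adj u v) {h : Z → Bool} (hh : h ∈ gadgetH Z k) :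
    ∃ S : Finset ((V × Z) ⊕ (Z × V)), #S ≤ k ∧ IsTeachingSet (redC G k) (cH h) S := by
  obtain ⟨M, hMk, hMT, hMh⟩ :=
    exists_pairing_of_card_eq (hT.trans (card_trueSet_of_mem_gadgetH hh).symm)
  refine ⟨M.image Sum.inl, card_image_le.trans (hMk.trans hT.le), ?_⟩
  rintro _ hc' hne
  rcases mem_union.1 hc' with hc' | hc'
  · obtain ⟨h', hh', rfl⟩ := mem_image.1 hc'
    obtain ⟨z, hz, hz'⟩ := exists_true_false_of_mem_gadgetH hh hh' (ne_of_apply_ne cH hne).symm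
    obtain ⟨v, -, hvz⟩ := hMh z (by simpa [trueSet] using hz)
    exact ⟨Sum.inl (v, z), mem_image_of_mem _ hvz, by simp [cH, hz, hz']⟩
  · obtain ⟨⟨u, h'⟩, -, rfl⟩ := mem_image.1 hc'
    obtain ⟨v, hvT, hvu⟩ := hdom u
    obtain ⟨z, hz, hvz⟩ := hMT v hvT
    refine ⟨Sum.inl (v, z), mem_image_of_mem _ hvz, ?_⟩
    simp only [trueSet, mem_filter, mem_univ, true_and] at hz
    rcases hvu with rfl | hadj
    · simp [cH, cUH, hz]
    · simp [cH, cUH, hz, hadj]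

end Reduction

theorem stmt13_general {V Z : Type*} [Fintype V] [DecidableEq V] [Fintype Z] [DecidableEq Z]
    (G : SimpleGraph V) [DecidableRel G.Adj]
    (k : ℕ) (hk : 1 ≤ k)
    (T : Finset V) (hTcard : T.card = k)
    (hdom : ∀ u : V, ∃ v ∈ T, v = u ∨ G.Adj u v) :
    RTD (redC (Z := Z) G k) ≤ k := by
  have hB :
      HasPlanOfWidth (((univ : Finset V) ×ˢ gadgetH Z k).image fun p => cUH G p.1 p.2) k := by
    simpa using (hasPlanOfWidth_empty k).union fun c hc => by
      obtain ⟨⟨u, h⟩, hp, rfl⟩ := mem_image.1 hc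
      simpa using exists_teachingSet_cUH G hk (mem_product.1 hp).2 u
  rw [redC, union_comm]
  refine RTD_le_of_hasPlanOfWidth (hB.union fun c hc => ?_)
  obtain ⟨h, hh, rfl⟩ := mem_image.1 hc
  simpa [redC, union_comm] using exists_teachingSet_cH G hTcard hdom hh

theorem stmt13 {V Z : Type*} [Fintype V] [DecidableEq V] [Fintype Z] [DecidableEq Z]
    (G : SimpleGraph V) [DecidableRel G.Adj]
    (k : ℕ) (hk : 1 ≤ k) (hZ : Fintype.card Z = 2 * k + 1)
    (T : Finset V) (hTcard : T.card = k)
    (hdom : ∀ u : V, ∃ v ∈ T, v = u ∨ G.Adj u v) :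
    RTD (redC (Z := Z) G k) ≤ k :=
  stmt13_general G k hk T hTcard hdom
end

section
/- Soundness of the RTD-hardness reduction: Let G = (V,E) be a finite nonempty graph, k ≥ 1, and let C be the concept class of the reduction. If RTD(C) ≤ k, then G has a dominating set of size at most k. -/
/-! The first teaching set `S` of a plan of order `k` teaches its concept with respect to the
whole class. Read on the `Z`-coordinates, a set of at most `k` points teaching a gadget function
`h` must contain every one of `h`: otherwise a one and a zero of `h` outside it (there are
`k + 1` zeros) could be swapped. Counting then forces `S` to consist of points over the ones
of `h` only, on the side that the concept reads `h` from. So `S` cannot teach `c_{u,h}`, as `c_h`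
agrees with it on such points; and if `S` teaches `c_h`, the vertices of `S` dominate `G`, since
for an undominated `u` the concept `c_{u,h}` would agree with `c_h` on `S`. -/

open Finset

lemma IsTeachingSet.eq_of_forall_mem_eq {X : Type*} {C : Finset (X → Bool)} {c c' : X → Bool}
    {S : Finset X} (hS : IsTeachingSet C c S) (hc' : c' ∈ C) (heq : ∀ x ∈ S, c x = c' x) :
    c' = c := by
  by_contra hne
  obtain ⟨x, hx, hne'⟩ := hS c' hc' hne
  exact hne' (heq x hx)

lemma isTeachingSet_univ {X : Type*} [Fintype X] (C : Finset (X → Bool)) (c : X → Bool) :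
    IsTeachingSet C c univ :=
  fun _ _ hne => by simpa using Function.ne_iff.mp (Ne.symm hne)

section Teaching

variable {X : Type*} [Fintype X] [DecidableEq X]

lemma exists_isTeachingPlan_card_le (C : Finset (X → Bool)) :
    ∃ L, IsTeachingPlan C L ∧ ∀ p ∈ L, #p.2 ≤ Fintype.card X := by
  have hfst : (C.toList.map fun c => (c, (univ : Finset X))).map Prod.fst = C.toList := by
    simp [List.map_map, Function.comp_def]
  refine ⟨C.toList.map fun c => (c, univ),
    ⟨?_, ?_, fun _ _ => by simpa using isTeachingSet_univ _ _⟩, ?_⟩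
  · simpa [hfst] using C.nodup_toList
  · simp [hfst]
  · simp

lemma exists_isTeachingSet_card_le_of_RTD_le {C : Finset (X → Bool)} {k : ℕ}
    (hC : C.Nonempty) (hk : RTD C ≤ k) :
    ∃ c ∈ C, ∃ S : Finset X, #S ≤ k ∧ IsTeachingSet C c S := by
  obtain ⟨L, ⟨-, hL, hteach⟩, hbound⟩ :=
    Nat.sInf_mem (s := {k | ∃ L, IsTeachingPlan C L ∧ ∀ p ∈ L, #p.2 ≤ k})
      ⟨_, exists_isTeachingPlan_card_le C⟩
  cases L with
  | nil => simp [← hL] at hC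
  | cons p L =>
    have hp := hteach 0 (by simp)
    simp only [List.drop_zero, hL] at hp
    exact ⟨p.1, hL ▸ by simp, p.2, (hbound p (by simp)).trans hk, hp⟩

end Teaching

lemma Finset.forall_mem_of_subset_image_filter_of_card_le {α β : Type*} [DecidableEq β]
    {s : Finset α} {t : Finset β} {p : α → Prop} [DecidablePred p] {f : α → β}
    (hts : t ⊆ (s.filter p).image f) (hst : #s ≤ #t) : ∀ x ∈ s, p x ∧ f x ∈ t := by
  have hfilter : s.filter p = s :=
    eq_of_subset_of_card_le (filter_subset p s)
      (hst.trans ((card_le_card hts).trans card_image_le))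
  have himage : (s.filter p).image f = t :=
    (eq_of_subset_of_card_le hts ((card_image_le.trans (card_filter_le s p)).trans hst)).symm
  intro x hx
  rw [← hfilter] at hx
  exact ⟨(mem_filter.mp hx).2, himage ▸ mem_image_of_mem f hx⟩

section Gadget

variable {Z : Type*} [Fintype Z] [DecidableEq Z] {k : ℕ} {h : Z → Bool}

lemma mem_gadgetH : h ∈ gadgetH Z k ↔ #(univ.filter fun z => h z = true) = k := by
  simp [gadgetH]

lemma card_filter_eq_false_of_mem_gadgetH (hh : h ∈ gadgetH Z k) :
    #(univ.filter fun z => h z = false) = Fintype.card Z - k := by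
  have := card_filter_add_card_filter_not (s := univ) (fun z => h z = true)
  simp only [Bool.not_eq_true, card_univ] at this
  rw [mem_gadgetH.mp hh] at this
  omega

lemma exists_eq_false_of_mem_gadgetH (hZ : k < Fintype.card Z) (hh : h ∈ gadgetH Z k) :
    ∃ z, h z = false := by
  have := card_filter_eq_false_of_mem_gadgetH hh
  obtain ⟨z, hz⟩ := card_pos.mp (show 0 < #(univ.filter fun z => h z = false) by omega)
  exact ⟨z, (mem_filter.mp hz).2⟩

lemma gadgetH_nonempty (hk : k ≤ Fintype.card Z) : (gadgetH Z k).Nonempty := by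
  obtain ⟨A, -, hA⟩ := exists_subset_card_eq (s := (univ : Finset Z)) (by simpa using hk)
  exact ⟨fun z => decide (z ∈ A), by simpa [mem_gadgetH] using hA⟩

lemma comp_perm_mem_gadgetH (hh : h ∈ gadgetH Z k) (σ : Equiv.Perm Z) : h ∘ σ ∈ gadgetH Z k := by
  rw [mem_gadgetH, ← mem_gadgetH.mp hh]
  exact card_bij' (fun z _ => σ z) (fun z _ => σ.symm z) (by simp) (by simp) (by simp) (by simp)

lemma IsTeachingSet.gadgetH_subset_or_subset {S : Finset Z} (hh : h ∈ gadgetH Z k)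
    (hS : IsTeachingSet (gadgetH Z k) h S) :
    univ.filter (fun z => h z = true) ⊆ S ∨ univ.filter (fun z => h z = false) ⊆ S := by
  by_contra hcon
  simp only [not_or, not_subset, mem_filter, mem_univ, true_and] at hcon
  obtain ⟨⟨z₀, hz₀, hz₀S⟩, ⟨z₁, hz₁, hz₁S⟩⟩ := hcon
  have hne : h ∘ Equiv.swap z₀ z₁ ≠ h := fun he => by
    simpa [hz₀, hz₁] using congrFun he z₀
  obtain ⟨z, hzS, hz⟩ := hS _ (comp_perm_mem_gadgetH hh _) hne
  have hz₀z : z ≠ z₀ := by rintro rfl; exact hz₀S hzS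
  have hz₁z : z ≠ z₁ := by rintro rfl; exact hz₁S hzS
  simp [Equiv.swap_apply_of_ne_of_ne hz₀z hz₁z] at hz

lemma IsTeachingSet.gadgetH_filter_subset {S : Finset Z} (hZ : 2 * k < Fintype.card Z)
    (hh : h ∈ gadgetH Z k) (hSk : #S ≤ k) (hS : IsTeachingSet (gadgetH Z k) h S) :
    univ.filter (fun z => h z = true) ⊆ S := by
  refine (hS.gadgetH_subset_or_subset hh).resolve_right fun hsub => ?_
  have := card_le_card hsub
  rw [card_filter_eq_false_of_mem_gadgetH hh] at this
  omega

end Gadget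

lemma cH_ne_cUH {V Z : Type*} [DecidableEq V] {G : SimpleGraph V} [DecidableRel G.Adj]
    {h : Z → Bool} {z : Z} (hz : h z = false) (u : V) : cH h ≠ cUH G u h := fun he => by
  simpa [cH, cUH, hz] using congrFun he (Sum.inr (z, u))

section Reduction

variable {V Z : Type*} [Fintype V] [DecidableEq V] [Fintype Z] [DecidableEq Z]
  {G : SimpleGraph V} [DecidableRel G.Adj] {k : ℕ} {h : Z → Bool} {u : V}
  {S : Finset ((V × Z) ⊕ (Z × V))}

def zCoord : (V × Z) ⊕ (Z × V) → Z := Sum.elim Prod.snd Prod.fst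

def vCoord : (V × Z) ⊕ (Z × V) → V := Sum.elim Prod.fst Prod.snd

lemma cH_mem_redC (hh : h ∈ gadgetH Z k) : cH h ∈ redC G k :=
  mem_union_left _ (mem_image_of_mem _ hh)

lemma cUH_mem_redC (u : V) (hh : h ∈ gadgetH Z k) : cUH G u h ∈ redC G k :=
  mem_union_right _ (mem_image.mpr ⟨(u, h), mem_product.mpr ⟨mem_univ u, hh⟩, rfl⟩)

lemma mem_redC {c : (V × Z) ⊕ (Z × V) → Bool} :
    c ∈ redC G k ↔ (∃ h ∈ gadgetH Z k, cH h = c) ∨ ∃ u, ∃ h ∈ gadgetH Z k, cUH G u h = c := by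
  simp [redC]

lemma IsTeachingSet.gadgetH_of_cH [Nonempty V] (hS : IsTeachingSet (redC G k) (cH h) S) :
    IsTeachingSet (gadgetH Z k) h ((S.filter fun x => x.isLeft).image zCoord) := by
  intro h' hh' hne
  obtain ⟨z, hz⟩ := Function.ne_iff.mp hne
  have hne' : cH h' ≠ cH (V := V) h := fun he =>
    hz (congrFun he (Sum.inl (Classical.arbitrary V, z)))
  obtain ⟨x, hxS, hx⟩ := hS _ (cH_mem_redC hh') hne'
  rcases x with ⟨v, z'⟩ | ⟨z', v⟩
  · exact ⟨z', mem_image.mpr ⟨_, mem_filter.mpr ⟨hxS, rfl⟩, rfl⟩, hx⟩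
  · simp [cH] at hx

lemma IsTeachingSet.gadgetH_of_cUH (hS : IsTeachingSet (redC G k) (cUH G u h) S) :
    IsTeachingSet (gadgetH Z k) h
      ((S.filter fun x => x.isRight ∧ vCoord x = u).image zCoord) := by
  intro h' hh' hne
  obtain ⟨z, hz⟩ := Function.ne_iff.mp hne
  have hne' : cUH G u h' ≠ cUH G u h := fun he =>
    hz (by simpa [cUH] using congrFun he (Sum.inr (z, u)))
  obtain ⟨x, hxS, hx⟩ := hS _ (cUH_mem_redC u hh') hne'
  rcases x with ⟨v, z'⟩ | ⟨z', v⟩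
  · simp [cUH] at hx
  · obtain rfl : v = u := by by_contra huv; simp [cUH, Ne.symm huv] at hx
    exact ⟨z', mem_image.mpr ⟨_, mem_filter.mpr ⟨hxS, rfl, rfl⟩, rfl⟩, by simpa [cUH] using hx⟩

lemma IsTeachingSet.isDominating_of_cH [Nonempty V] (hZ : 2 * k < Fintype.card Z)
    (hh : h ∈ gadgetH Z k) (hSk : #S ≤ k) (hS : IsTeachingSet (redC G k) (cH h) S) :
    ∀ u : V, ∃ v ∈ S.image vCoord, v = u ∨ G.Adj u v := by
  have hpinned := forall_mem_of_subset_image_filter_of_card_le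
    (hS.gadgetH_of_cH.gadgetH_filter_subset hZ hh
      ((card_image_le.trans (card_filter_le _ _)).trans hSk))
    (hSk.trans (mem_gadgetH.mp hh).ge)
  by_contra! hu
  obtain ⟨u, hu⟩ := hu
  obtain ⟨z, hz⟩ := exists_eq_false_of_mem_gadgetH (by omega) hh
  refine cH_ne_cUH hz u (hS.eq_of_forall_mem_eq (cUH_mem_redC u hh) fun x hx => ?_).symm
  obtain ⟨hleft, htrue⟩ := hpinned x hx
  have hux := hu (vCoord x) (mem_image_of_mem _ hx)
  rcases x with ⟨v, z'⟩ | ⟨z', v⟩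
  · simp_all [cH, cUH, zCoord, vCoord]
  · simp at hleft

lemma IsTeachingSet.not_cUH (hZ : 2 * k < Fintype.card Z) (hh : h ∈ gadgetH Z k)
    (hSk : #S ≤ k) : ¬ IsTeachingSet (redC G k) (cUH G u h) S := by
  intro hS
  have hpinned := forall_mem_of_subset_image_filter_of_card_le
    (hS.gadgetH_of_cUH.gadgetH_filter_subset hZ hh
      ((card_image_le.trans (card_filter_le _ _)).trans hSk))
    (hSk.trans (mem_gadgetH.mp hh).ge)
  obtain ⟨z, hz⟩ := exists_eq_false_of_mem_gadgetH (by omega) hh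
  refine cH_ne_cUH hz u (hS.eq_of_forall_mem_eq (cH_mem_redC hh) fun x hx => ?_)
  obtain ⟨⟨hright, rfl⟩, htrue⟩ := hpinned x hx
  rcases x with ⟨v, z'⟩ | ⟨z', v⟩
  · simp at hright
  · simp_all [cH, cUH, zCoord, vCoord]

end Reduction

theorem stmt14_general {V Z : Type*} [Fintype V] [DecidableEq V] [Fintype Z] [DecidableEq Z]
    [Nonempty V] (G : SimpleGraph V) [DecidableRel G.Adj]
    (k : ℕ) (hZ : Fintype.card Z = 2 * k + 1)
    (hRTD : RTD (redC (Z := Z) G k) ≤ k) :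
    ∃ T : Finset V, T.card ≤ k ∧ ∀ u : V, ∃ v ∈ T, v = u ∨ G.Adj u v := by
  obtain ⟨h₀, hh₀⟩ := gadgetH_nonempty (Z := Z) (k := k) (by omega)
  obtain ⟨c, hc, S, hSk, hS⟩ :=
    exists_isTeachingSet_card_le_of_RTD_le ⟨_, cH_mem_redC (V := V) (G := G) hh₀⟩ hRTD
  rcases mem_redC.mp hc with ⟨h, hh, rfl⟩ | ⟨u, h, hh, rfl⟩
  · exact ⟨S.image vCoord, card_image_le.trans hSk, hS.isDominating_of_cH (by omega) hh hSk⟩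
  · exact absurd hS (IsTeachingSet.not_cUH (by omega) hh hSk)

theorem stmt14 {V Z : Type*} [Fintype V] [DecidableEq V] [Fintype Z] [DecidableEq Z]
    [Nonempty V] (G : SimpleGraph V) [DecidableRel G.Adj]
    (k : ℕ) (hk : 1 ≤ k) (hZ : Fintype.card Z = 2 * k + 1)
    (hRTD : RTD (redC (Z := Z) G k) ≤ k) :
    ∃ T : Finset V, T.card ≤ k ∧ ∀ u : V, ∃ v ∈ T, v = u ∨ G.Adj u v :=
  stmt14_general G k hZ hRTD
end
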